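/- The homomorphism κ : F₃ → D(ℤ²) defined by κ(α₁) = ((0,0), 1̄), κ(α₂) = ((1,0), 1̄), κ(α₃) = ((0,−1), 1̄) (where 1̄ is the nontrivial element of ℤ/2) is surjective, and its kernel is invariant under the Artin automorphisms: σ₁(ker κ) = ker κ and σ₂(ker κ) = ker κ. -/

import Mathlib

/-
Writing `s` for the nontrivial element of `ℤ/2`, the words `α₂α₁` and `α₁α₃` map to the unit
translations of `ℤ²` and `α₁` maps to `s`, so `κ` is onto. For the kernel, each of `σ₁, σ₂` and
of their inverses intertwines `κ` with an affine endomorphism `(q, ε) ↦ (A q + ε c, ε)` of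
`D(ℤ²)`; hence all four map `ker κ` into itself, and `σᵢ (ker κ) = ker κ`.
-/

/-- The action of `ℤ/2` on an abelian group `Q` in which the nontrivial element acts by
inversion. -/
def dihedralAct (Q : Type*) [CommGroup Q] : Multiplicative (ZMod 2) →* MulAut Q where
  toFun x := MulEquiv.inv Q ^ (Multiplicative.toAdd x).val
  map_one' := by simp
  map_mul' x y := by
    have h2 : (MulEquiv.inv Q) ^ 2 = 1 := by
      ext a
      simp [pow_succ]
    show MulEquiv.inv Q ^ (Multiplicative.toAdd (x * y)).val = _
    rw [toAdd_mul, ZMod.val_add, ← pow_eq_pow_mod _ h2, pow_add]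

/-- The generalized dihedral group `D(Q) = Q ⋊ ℤ/2`, the generator of `ℤ/2` acting on the
abelian group `Q` by inversion. -/
abbrev GenDihedral (Q : Type*) [CommGroup Q] :=
  Q ⋊[dihedralAct Q] Multiplicative (ZMod 2)

/-- The homomorphism `κ : F₃ → D(ℤ²)`, `α₀ ↦ ((0,0), 1̄)`, `α₁ ↦ ((1,0), 1̄)`,
`α₂ ↦ ((0,−1), 1̄)`. -/
def kappaHom : FreeGroup (Fin 3) →* GenDihedral (Multiplicative (ℤ × ℤ)) :=
  FreeGroup.lift fun i =>
    ⟨Multiplicative.ofAdd (![((0 : ℤ), (0 : ℤ)), (1, 0), (0, -1)] i),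
      Multiplicative.ofAdd (1 : ZMod 2)⟩

/-- The Artin automorphism `σ₁` of the free group on `α₀, α₁, α₂`:
`α₀ ↦ α₀α₁α₀⁻¹`, `α₁ ↦ α₀`, `α₂ ↦ α₂`. -/
def artinSigma1 : FreeGroup (Fin 3) →* FreeGroup (Fin 3) :=
  FreeGroup.lift fun i =>
    if i = 0 then FreeGroup.of 0 * FreeGroup.of 1 * (FreeGroup.of 0)⁻¹
    else if i = 1 then FreeGroup.of 0
    else FreeGroup.of 2

/-- The Artin automorphism `σ₂` of the free group on `α₀, α₁, α₂`:
`α₀ ↦ α₀`, `α₁ ↦ α₁α₂α₁⁻¹`, `α₂ ↦ α₁`. -/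
def artinSigma2 : FreeGroup (Fin 3) →* FreeGroup (Fin 3) :=
  FreeGroup.lift fun i =>
    if i = 0 then FreeGroup.of 0
    else if i = 1 then FreeGroup.of 1 * FreeGroup.of 2 * (FreeGroup.of 1)⁻¹
    else FreeGroup.of 1

open Multiplicative

lemma Multiplicative.zmod_two_eq_one_or_eq_ofAdd_one (x : Multiplicative (ZMod 2)) :
    x = 1 ∨ x = ofAdd 1 := by
  revert x; decide

@[simp]
lemma dihedralAct_ofAdd_one_apply {Q : Type*} [CommGroup Q] (q : Q) :
    dihedralAct Q (ofAdd 1) q = q⁻¹ := rfl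

@[simp]
lemma dihedralAct_ofAdd_one_symm_apply {Q : Type*} [CommGroup Q] (q : Q) :
    (dihedralAct Q (ofAdd 1)).symm q = q⁻¹ := rfl

namespace GenDihedral

variable {Q : Type*} [CommGroup Q]

/-- Multiplicative for every `A` and `c`, because `A` commutes with inversion. -/
def affineHom (A : Q →* Q) (c : Q) : GenDihedral Q →* GenDihedral Q where
  toFun g := ⟨A g.left * c ^ (toAdd g.right).val, g.right⟩
  map_one' := by ext <;> simp
  map_mul' := by
    rintro ⟨p, x⟩ ⟨q, y⟩
    have hval₁ : (1 : ZMod 2).val = 1 := rfl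
    have hval₂ : (1 + 1 : ZMod 2).val = 0 := rfl
    rcases zmod_two_eq_one_or_eq_ofAdd_one x with rfl | rfl <;>
      rcases zmod_two_eq_one_or_eq_ofAdd_one y with rfl | rfl <;>
      ext <;> simp [hval₁, hval₂, ← ofAdd_add, mul_assoc, mul_comm, mul_left_comm]

@[simp]
lemma affineHom_mk_ofAdd_one (A : Q →* Q) (c q : Q) :
    affineHom A c ⟨q, ofAdd 1⟩ = ⟨A q * c, ofAdd 1⟩ := by
  show (⟨A q * c ^ (1 : ZMod 2).val, ofAdd 1⟩ : GenDihedral Q) = _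
  rw [ZMod.val_one, pow_one]

end GenDihedral

def intMatrixHom (a b c d : ℤ) : Multiplicative (ℤ × ℤ) →* Multiplicative (ℤ × ℤ) :=
  AddMonoidHom.toMultiplicative <|
    (a • AddMonoidHom.fst ℤ ℤ + b • AddMonoidHom.snd ℤ ℤ).prod
      (c • AddMonoidHom.fst ℤ ℤ + d • AddMonoidHom.snd ℤ ℤ)

@[simp]
lemma intMatrixHom_ofAdd (a b c d : ℤ) (p : ℤ × ℤ) :
    intMatrixHom a b c d (ofAdd p) = ofAdd (a * p.1 + b * p.2, c * p.1 + d * p.2) := rfl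

lemma Subgroup.map_eq_self_of_comp_eq_id {G : Type*} [Group G] {K : Subgroup G} {σ τ : G →* G}
    (hστ : σ.comp τ = MonoidHom.id G) (hσ : K ≤ K.comap σ) (hτ : K ≤ K.comap τ) :
    K.map σ = K :=
  le_antisymm (Subgroup.map_le_iff_le_comap.2 hσ) fun x hx =>
    ⟨τ x, hτ hx, DFunLike.congr_fun hστ x⟩

lemma MonoidHom.ker_le_comap_ker_of_comp_eq {G H : Type*} [Group G] [Group H] {κ : G →* H}
    {σ : G →* G} {φ : H →* H} (h : κ.comp σ = φ.comp κ) : κ.ker ≤ κ.ker.comap σ := by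
  rw [MonoidHom.comap_ker, h, ← MonoidHom.comap_ker]
  exact MonoidHom.ker_le_comap κ _

def artinSigma1Inv : FreeGroup (Fin 3) →* FreeGroup (Fin 3) :=
  FreeGroup.lift fun i =>
    if i = 0 then FreeGroup.of 1
    else if i = 1 then (FreeGroup.of 1)⁻¹ * FreeGroup.of 0 * FreeGroup.of 1
    else FreeGroup.of 2

def artinSigma2Inv : FreeGroup (Fin 3) →* FreeGroup (Fin 3) :=
  FreeGroup.lift fun i =>
    if i = 0 then FreeGroup.of 0
    else if i = 1 then FreeGroup.of 2
    else (FreeGroup.of 2)⁻¹ * FreeGroup.of 1 * FreeGroup.of 2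

lemma artinSigma1_comp_artinSigma1Inv : artinSigma1.comp artinSigma1Inv = MonoidHom.id _ := by
  ext i
  fin_cases i <;> simp [artinSigma1, artinSigma1Inv, mul_assoc]

lemma artinSigma2_comp_artinSigma2Inv : artinSigma2.comp artinSigma2Inv = MonoidHom.id _ := by
  ext i
  fin_cases i <;> simp [artinSigma2, artinSigma2Inv, mul_assoc]

lemma kappaHom_of (i : Fin 3) : kappaHom (FreeGroup.of i) =
    ⟨ofAdd (![((0 : ℤ), (0 : ℤ)), (1, 0), (0, -1)] i), ofAdd 1⟩ :=
  FreeGroup.lift_apply_of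

open GenDihedral

lemma kappaHom_comp_artinSigma1 : kappaHom.comp artinSigma1 =
    (affineHom (intMatrixHom 1 (-1) 0 1) (ofAdd (-1, 0))).comp kappaHom := by
  refine FreeGroup.ext_hom _ _ fun i => ?_
  fin_cases i <;> ext <;> simp [artinSigma1, kappaHom_of, -SemidirectProduct.mk_eq_inl_mul_inr]

lemma kappaHom_comp_artinSigma1Inv : kappaHom.comp artinSigma1Inv =
    (affineHom (intMatrixHom 1 1 0 1) (ofAdd (1, 0))).comp kappaHom := by
  refine FreeGroup.ext_hom _ _ fun i => ?_
  fin_cases i <;> ext <;> simp [artinSigma1Inv, kappaHom_of, -SemidirectProduct.mk_eq_inl_mul_inr]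

lemma kappaHom_comp_artinSigma2 : kappaHom.comp artinSigma2 =
    (affineHom (intMatrixHom 2 (-1) 1 0) 1).comp kappaHom := by
  refine FreeGroup.ext_hom _ _ fun i => ?_
  fin_cases i <;> ext <;> simp [artinSigma2, kappaHom_of, -SemidirectProduct.mk_eq_inl_mul_inr]

lemma kappaHom_comp_artinSigma2Inv : kappaHom.comp artinSigma2Inv =
    (affineHom (intMatrixHom 0 1 (-1) 2) 1).comp kappaHom := by
  refine FreeGroup.ext_hom _ _ fun i => ?_
  fin_cases i <;> ext <;> simp [artinSigma2Inv, kappaHom_of, -SemidirectProduct.mk_eq_inl_mul_inr]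

lemma inl_mem_range_kappaHom (q : Multiplicative (ℤ × ℤ)) :
    SemidirectProduct.inl q ∈ kappaHom.range := by
  have h₁ : kappaHom (.of 1 * .of 0) = SemidirectProduct.inl (ofAdd (1, 0)) := by
    ext <;> simp [kappaHom_of, CharTwo.add_self_eq_zero, -SemidirectProduct.mk_eq_inl_mul_inr]
  have h₂ : kappaHom (.of 0 * .of 2) = SemidirectProduct.inl (ofAdd (0, 1)) := by
    ext <;> simp [kappaHom_of, CharTwo.add_self_eq_zero, -SemidirectProduct.mk_eq_inl_mul_inr]
  have hq : q = ofAdd (1, 0) ^ (toAdd q).1 * ofAdd (0, 1) ^ (toAdd q).2 := by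
    ext <;> simp
  rw [hq, map_mul, map_zpow, map_zpow, ← h₁, ← h₂]
  exact mul_mem (zpow_mem (kappaHom.mem_range.2 ⟨_, rfl⟩) _)
    (zpow_mem (kappaHom.mem_range.2 ⟨_, rfl⟩) _)

lemma inr_mem_range_kappaHom (x : Multiplicative (ZMod 2)) :
    SemidirectProduct.inr x ∈ kappaHom.range := by
  rcases zmod_two_eq_one_or_eq_ofAdd_one x with rfl | rfl
  · exact one_mem _
  · exact ⟨.of 0, by ext <;> simp [kappaHom_of, -SemidirectProduct.mk_eq_inl_mul_inr]⟩

lemma kappaHom_surjective : Function.Surjective kappaHom := by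
  rw [← MonoidHom.range_eq_top, eq_top_iff]
  rintro g -
  rw [← SemidirectProduct.inl_left_mul_inr_right g]
  exact mul_mem (inl_mem_range_kappaHom _) (inr_mem_range_kappaHom _)

/-- The homomorphism `κ : F₃ → D(ℤ²)` defined by `κ(α₀) = ((0,0), 1̄)`,
`κ(α₁) = ((1,0), 1̄)`, `κ(α₂) = ((0,−1), 1̄)` is surjective, and its kernel is invariant
under the Artin automorphisms: `σ₁(ker κ) = ker κ` and `σ₂(ker κ) = ker κ`. -/
theorem kappa_surjective_and_ker_invariant :
    Function.Surjective ⇑kappaHom ∧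
      Subgroup.map artinSigma1 kappaHom.ker = kappaHom.ker ∧
      Subgroup.map artinSigma2 kappaHom.ker = kappaHom.ker :=
  ⟨kappaHom_surjective,
    Subgroup.map_eq_self_of_comp_eq_id artinSigma1_comp_artinSigma1Inv
      (MonoidHom.ker_le_comap_ker_of_comp_eq kappaHom_comp_artinSigma1)
      (MonoidHom.ker_le_comap_ker_of_comp_eq kappaHom_comp_artinSigma1Inv),
    Subgroup.map_eq_self_of_comp_eq_id artinSigma2_comp_artinSigma2Inv
      (MonoidHom.ker_le_comap_ker_of_comp_eq kappaHom_comp_artinSigma2)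
      (MonoidHom.ker_le_comap_ker_of_comp_eq kappaHom_comp_artinSigma2Inv)⟩
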